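/- Let k ≥ 1 and let ζ : V × V → {0,2} on polymers, where for a distinguished polymer ω we have ζ(η,ω) = 2·𝟙(η ∼ ω) for η in a set S of polymers, with ∼ a fixed symmetric relation. Suppose the cluster C consists of the multiset S ∪ {ω} where ω interacts with exactly d elements of S (counted with multiplicity). Then the sum over connected graphs on C in which ω has degree exactly 1, of (-1)^{|E(G)|} ∏_{(i,j)∈E(G)} ζ(η_i,η_j), equals (-2)·d times the corresponding Ursell sum over connected graphs on S alone. -/

import Mathlib

/-! A connected graph on `S ∪ {ω}` in which `ω` has degree one is the same thing as a
connected graph `H` on `S` together with the vertex `j` of `S` to which `ω` is attached as a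
leaf (deleting a leaf keeps a graph connected). Its weight is that of `H` times the one extra
factor `-ζ(η_j, ω) = -2·𝟙(η_j ∼ ω)`, and summing over `j` gives `-2d`. -/

open scoped Classical

noncomputable def graphWeight {V : Type*} (ζ : V → V → ℝ) {k : ℕ} (η : Fin k → V)
    (G : SimpleGraph (Fin k)) : ℝ :=
  (-1 : ℝ) ^ (Finset.univ.filter (fun p : Fin k × Fin k => p.1 < p.2 ∧ G.Adj p.1 p.2)).card *
    ∏ p ∈ Finset.univ.filter (fun p : Fin k × Fin k => p.1 < p.2 ∧ G.Adj p.1 p.2),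
      ζ (η p.1) (η p.2)

namespace SimpleGraph

variable {k : ℕ}

def attachLeaf (j : Fin k) (G : SimpleGraph (Fin k)) : SimpleGraph (Fin (k + 1)) :=
  G.map Fin.castSuccEmb ⊔ edge j.castSucc (Fin.last k)

@[simp]
lemma attachLeaf_adj_castSucc_castSucc (j : Fin k) (G : SimpleGraph (Fin k)) (a b : Fin k) :
    (attachLeaf j G).Adj a.castSucc b.castSucc ↔ G.Adj a b := by
  rw [attachLeaf, sup_adj, map_adj]
  simp [edge_adj, Fin.castSucc_ne_last]

@[simp]
lemma attachLeaf_adj_last_castSucc (j : Fin k) (G : SimpleGraph (Fin k)) (a : Fin k) :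
    (attachLeaf j G).Adj (Fin.last k) a.castSucc ↔ a = j := by
  rw [attachLeaf, sup_adj, map_adj]
  simp [edge_adj, (Fin.castSucc_ne_last _).symm, eq_comm (a := a)]

@[simp]
lemma attachLeaf_adj_castSucc_last (j : Fin k) (G : SimpleGraph (Fin k)) (a : Fin k) :
    (attachLeaf j G).Adj a.castSucc (Fin.last k) ↔ a = j := by
  rw [adj_comm, attachLeaf_adj_last_castSucc]

@[simp]
lemma comap_castSucc_attachLeaf (j : Fin k) (G : SimpleGraph (Fin k)) :
    (attachLeaf j G).comap Fin.castSucc = G := by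
  ext a b
  simp

lemma neighborFinset_attachLeaf_last (j : Fin k) (G : SimpleGraph (Fin k)) :
    (attachLeaf j G).neighborFinset (Fin.last k) = {j.castSucc} := by
  ext x
  induction x using Fin.lastCases <;> simp [(Fin.castSucc_ne_last _).symm]

lemma degree_attachLeaf_last (j : Fin k) (G : SimpleGraph (Fin k)) :
    (attachLeaf j G).degree (Fin.last k) = 1 := by
  rw [← card_neighborFinset_eq_degree, neighborFinset_attachLeaf_last, Finset.card_singleton]

lemma attachLeaf_injective : Function.Injective (Function.uncurry (@attachLeaf k)) := by
  rintro ⟨j, G⟩ ⟨j', G'⟩ h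
  have hj : j = j' := by
    simpa using congrArg (fun H : SimpleGraph (Fin (k + 1)) => H.Adj (Fin.last k) j.castSucc) h
  have hG : G = G' := by
    simpa using congrArg (fun H => H.comap Fin.castSucc) h
  rw [hj, hG]

lemma Connected.attachLeaf {G : SimpleGraph (Fin k)} (hG : G.Connected) (j : Fin k) :
    (SimpleGraph.attachLeaf j G).Connected := by
  let φ : G →g SimpleGraph.attachLeaf j G :=
    ⟨Fin.castSucc, (attachLeaf_adj_castSucc_castSucc j G _ _).2⟩
  have hj : ∀ a, (SimpleGraph.attachLeaf j G).Reachable a j.castSucc := by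
    intro a
    induction a using Fin.lastCases with
    | last => exact ((attachLeaf_adj_last_castSucc j G j).2 rfl).reachable
    | cast i => exact (hG.preconnected i j).map φ
  exact ⟨fun a b => (hj a).trans (hj b).symm⟩

lemma Connected.comap_castSucc {G : SimpleGraph (Fin (k + 1))} (hG : G.Connected)
    (hdeg : G.degree (Fin.last k) = 1) : (G.comap Fin.castSucc).Connected := by
  refine (hG.induce_compl_singleton_of_degree_eq_one hdeg).map
    ⟨fun x => x.1.castPred (Set.mem_compl_singleton_iff.1 x.2), fun h => by
      rwa [comap_adj, Fin.castSucc_castPred, Fin.castSucc_castPred]⟩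
    fun j => ⟨⟨j.castSucc, Fin.castSucc_ne_last j⟩, rfl⟩

lemma exists_eq_attachLeaf {G : SimpleGraph (Fin (k + 1))} (hdeg : G.degree (Fin.last k) = 1) :
    ∃ j, G = attachLeaf j (G.comap Fin.castSucc) := by
  obtain ⟨u, hu, huniq⟩ := degree_eq_one_iff_existsUnique_adj.1 hdeg
  obtain ⟨j, rfl⟩ := Fin.exists_castSucc_eq.2 hu.ne'
  refine ⟨j, ?_⟩
  have hlast : ∀ a : Fin k, G.Adj (Fin.last k) a.castSucc ↔ a = j := fun a =>
    ⟨fun h => Fin.castSucc_injective _ (huniq _ h), fun h => h ▸ hu⟩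
  ext a b
  induction a using Fin.lastCases <;> induction b using Fin.lastCases <;>
    simp [hlast, adj_comm _ _ (Fin.last k)]

lemma connected_and_degree_last_eq_one_iff {G : SimpleGraph (Fin (k + 1))} :
    G.Connected ∧ G.degree (Fin.last k) = 1 ↔
      ∃ j H, H.Connected ∧ attachLeaf j H = G := by
  constructor
  · rintro ⟨hG, hdeg⟩
    obtain ⟨j, hj⟩ := exists_eq_attachLeaf hdeg
    exact ⟨j, _, hG.comap_castSucc hdeg, hj.symm⟩
  · rintro ⟨j, H, hH, rfl⟩
    exact ⟨hH.attachLeaf j, degree_attachLeaf_last j H⟩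

end SimpleGraph

open SimpleGraph Finset

section Weights

variable {k : ℕ}

noncomputable def edgePairs (G : SimpleGraph (Fin k)) : Finset (Fin k × Fin k) :=
  univ.filter fun p => p.1 < p.2 ∧ G.Adj p.1 p.2

lemma graphWeight_eq_edgePairs {V : Type*} (ζ : V → V → ℝ) (η : Fin k → V)
    (G : SimpleGraph (Fin k)) :
    graphWeight ζ η G = (-1) ^ #(edgePairs G) * ∏ p ∈ edgePairs G, ζ (η p.1) (η p.2) :=
  rfl

lemma edgePairs_attachLeaf (j : Fin k) (G : SimpleGraph (Fin k)) :
    edgePairs (attachLeaf j G) =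
      cons (j.castSucc, Fin.last k) ((edgePairs G).map (Fin.castSuccEmb.prodMap Fin.castSuccEmb))
        (by simp [Fin.castSucc_ne_last]) := by
  ext ⟨a, b⟩
  induction a using Fin.lastCases <;> induction b using Fin.lastCases <;>
    simp [edgePairs, Fin.castSucc_lt_last, (Fin.castSucc_lt_last _).not_gt,
      (Fin.castSucc_ne_last _).symm]

lemma graphWeight_attachLeaf {V : Type*} (ζ : V → V → ℝ) (η : Fin k → V) (ω : V)
    (j : Fin k) (G : SimpleGraph (Fin k)) :
    graphWeight ζ (Fin.snoc η ω) (attachLeaf j G) = -ζ (η j) ω * graphWeight ζ η G := by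
  simp only [graphWeight_eq_edgePairs, edgePairs_attachLeaf, card_cons, prod_cons, card_map,
    prod_map, Function.Embedding.coe_prodMap, Fin.coe_castSuccEmb, Prod.map_fst, Prod.map_snd,
    Fin.snoc_castSucc, Fin.snoc_last, pow_succ]
  ring

end Weights

lemma sum_filter_connected_degree_last_eq_one {M : Type*} [AddCommMonoid M] {k : ℕ}
    (f : SimpleGraph (Fin (k + 1)) → M) :
    ∑ G ∈ univ.filter (fun G => G.Connected ∧ G.degree (Fin.last k) = 1), f G =
      ∑ j, ∑ H ∈ univ.filter (fun H : SimpleGraph (Fin k) => H.Connected),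
        f (attachLeaf j H) := by
  have himage : univ.filter (fun G : SimpleGraph (Fin (k + 1)) =>
      G.Connected ∧ G.degree (Fin.last k) = 1) =
        (univ ×ˢ univ.filter (fun H : SimpleGraph (Fin k) => H.Connected)).image
          (Function.uncurry attachLeaf) := by
    ext G
    simp [connected_and_degree_last_eq_one_iff]
  rw [himage, sum_image attachLeaf_injective.injOn, sum_product]
  rfl

theorem degree_one_reduction_general {V : Type*} (ζ : V → V → ℝ) (R : V → V → Prop)
    (k : ℕ) (η : Fin k → V) (ω : V)
    (hωη : ∀ i : Fin k, ζ (η i) ω = if R (η i) ω then 2 else 0) :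
    (∑ G : SimpleGraph (Fin (k + 1)),
        if G.Connected ∧ G.degree (Fin.last k) = 1 then graphWeight ζ (Fin.snoc η ω) G else 0)
      = (-2) * ((Finset.univ.filter fun i : Fin k => R (η i) ω).card : ℝ) *
          ∑ G : SimpleGraph (Fin k), if G.Connected then graphWeight ζ η G else 0 := by
  have hω : ∑ j, -ζ (η j) ω = -2 * (#{i | R (η i) ω} : ℝ) := by
    simp [hωη, sum_ite, mul_comm]
  rw [← sum_filter, sum_filter_connected_degree_last_eq_one]
  simp only [graphWeight_attachLeaf, ← mul_sum, ← sum_mul, hω, sum_filter]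

/-- Degree-one reduction: if the distinguished polymer `ω` carries edge weight
`ζ(η,ω) = 2·𝟙(η ∼ ω)`, then the signed sum over connected graphs on `S ∪ {ω}` in which `ω`
has degree exactly `1` equals `(-2)·d` times the Ursell sum over connected graphs on `S`,
where `d` is the number of elements of `S` interacting with `ω`. -/
theorem degree_one_reduction {V : Type*} (ζ : V → V → ℝ) (R : V → V → Prop)
    (k : ℕ) (hk : 1 ≤ k) (η : Fin k → V) (ω : V)
    (hωη : ∀ i : Fin k, ζ (η i) ω = if R (η i) ω then 2 else 0)
    (hηω : ∀ i : Fin k, ζ ω (η i) = if R (η i) ω then 2 else 0) :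
    (∑ G : SimpleGraph (Fin (k + 1)),
        if G.Connected ∧ G.degree (Fin.last k) = 1 then graphWeight ζ (Fin.snoc η ω) G else 0)
      = (-2) * ((Finset.univ.filter fun i : Fin k => R (η i) ω).card : ℝ) *
          ∑ G : SimpleGraph (Fin k), if G.Connected then graphWeight ζ η G else 0 :=
  degree_one_reduction_general ζ R k η ω hωη
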